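/- arXiv:1404.3179 — 4 statements merged into one kernel-verified Lean document; each statement's English description precedes it below -/
import Mathlib

section
/- Let N and M be positive integers with M² | N, and let σ ∈ SL₂(ℤ) be a matrix whose lower-left entry c satisfies gcd(c, N) = N/M. Then σ · Γ₀(N;M) · σ⁻¹ ⊆ Γ₀(N;M). -/
/-- For positive integers `M ∣ N`, `Γ₀(N;M)` is the set of matrices
`(a b; c d)` in `SL₂(ℤ)` with `a ≡ d ≡ 1 (mod M)` and `c ≡ 0 (mod N)`. -/
def Gamma0NM (N M : ℕ) : Set (Matrix.SpecialLinearGroup (Fin 2) ℤ) :=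
  {γ | (γ : Matrix (Fin 2) (Fin 2) ℤ) 0 0 ≡ 1 [ZMOD (M : ℤ)] ∧
       (γ : Matrix (Fin 2) (Fin 2) ℤ) 1 1 ≡ 1 [ZMOD (M : ℤ)] ∧
       (N : ℤ) ∣ (γ : Matrix (Fin 2) (Fin 2) ℤ) 1 0}

theorem stmt_0 (N M : ℕ) (hN : 0 < N) (hM : 0 < M) (hMN : M ^ 2 ∣ N)
    (σ : Matrix.SpecialLinearGroup (Fin 2) ℤ)
    (hσ : Int.gcd ((σ : Matrix (Fin 2) (Fin 2) ℤ) 1 0) N = N / M) :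
    (fun γ => σ * γ * σ⁻¹) '' Gamma0NM N M ⊆ Gamma0NM N M := by
  have hinv := Matrix.SpecialLinearGroup.SL2_inv_expl σ
  have hdet := σ.2
  rw [Matrix.det_fin_two] at hdet
  have hMdvdN : M ∣ N := dvd_trans (dvd_pow_self M two_ne_zero) hMN
  have hMK : M ∣ N / M := by
    rcases hMN with ⟨k, hk⟩
    exact ⟨k, by rw [hk, pow_two, Nat.mul_assoc, Nat.mul_div_cancel_left _ hM]⟩
  obtain ⟨u, hu⟩ := hMK
  have hNKM : N = (N / M) * M := (Nat.div_mul_cancel hMdvdN).symm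
  have hcK : ((N / M : ℕ) : ℤ) ∣ (σ : Matrix (Fin 2) (Fin 2) ℤ) 1 0 := by
    rw [← hσ]; exact Int.gcd_dvd_left _ _
  obtain ⟨t, ht⟩ := hcK
  rintro _ ⟨γ, ⟨hp, hs, hr⟩, rfl⟩
  obtain ⟨z, hz⟩ := hr
  set a := (σ : Matrix (Fin 2) (Fin 2) ℤ) 0 0 with ha
  set b := (σ : Matrix (Fin 2) (Fin 2) ℤ) 0 1 with hb
  set c := (σ : Matrix (Fin 2) (Fin 2) ℤ) 1 0 with hcc
  set d := (σ : Matrix (Fin 2) (Fin 2) ℤ) 1 1 with hd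
  set p := (γ : Matrix (Fin 2) (Fin 2) ℤ) 0 0 with hpp
  set q := (γ : Matrix (Fin 2) (Fin 2) ℤ) 0 1 with hq
  set r := (γ : Matrix (Fin 2) (Fin 2) ℤ) 1 0 with hrr
  set s := (γ : Matrix (Fin 2) (Fin 2) ℤ) 1 1 with hss
  obtain ⟨x, hx⟩ : ((M : ℤ)) ∣ p - 1 := Int.ModEq.dvd hp.symm
  obtain ⟨y, hy⟩ : ((M : ℤ)) ∣ s - 1 := Int.ModEq.dvd hs.symm
  have hP : p = 1 + M * x := by linarith
  have hS : s = 1 + M * y := by linarith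
  have hK : ((N / M : ℕ) : ℤ) = M * u := by exact_mod_cast hu
  have hNZ : (N : ℤ) = (M : ℤ) * u * M := by
    rw [← hK]; exact_mod_cast hNKM
  have hC : c = (M : ℤ) * u * t := by rw [ht, hK]
  -- facts in ZMod M
  have hpZ : ((p : ℤ) : ZMod M) = 1 := by
    have := (ZMod.intCast_eq_intCast_iff p 1 M).mpr hp; simpa using this
  have hsZ : ((s : ℤ) : ZMod M) = 1 := by
    have := (ZMod.intCast_eq_intCast_iff s 1 M).mpr hs; simpa using this
  have hcZ : ((c : ℤ) : ZMod M) = 0 := by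
    rw [hC]; push_cast; simp
  have hrZ : ((r : ℤ) : ZMod M) = 0 := by
    rw [hz, hNZ]; push_cast; simp
  have hdetZ : ((a : ℤ) : ZMod M) * d - b * c = 1 := by
    have : (((a * d - b * c : ℤ)) : ZMod M) = ((1 : ℤ) : ZMod M) := by rw [hdet]
    push_cast at this; simpa using this
  refine ⟨?_, ?_, ?_⟩ <;>
    rw [Matrix.SpecialLinearGroup.coe_mul, Matrix.SpecialLinearGroup.coe_mul,
      Matrix.SpecialLinearGroup.coe_inv, Matrix.adjugate_fin_two] <;>
    simp only [Matrix.SpecialLinearGroup.coe_mul, Matrix.mul_apply, Fin.sum_univ_two,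
      Matrix.SpecialLinearGroup.coe_mk, Matrix.cons_val', Matrix.cons_val_zero,
      Matrix.cons_val_one, Matrix.head_cons, Matrix.head_fin_const, Matrix.empty_val',
      Matrix.cons_val_fin_one, Matrix.of_apply] <;>
    simp only [← ha, ← hb, ← hcc, ← hd, ← hpp, ← hq, ← hrr, ← hss]
  · rw [← ZMod.intCast_eq_intCast_iff _ _ M]
    push_cast
    rw [hcZ, hrZ, hpZ, hsZ]
    rw [hcZ] at hdetZ
    linear_combination hdetZ
  · rw [← ZMod.intCast_eq_intCast_iff _ _ M]
    push_cast
    rw [hcZ, hrZ, hpZ, hsZ]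
    rw [hcZ] at hdetZ
    linear_combination hdetZ
  · refine ⟨t * d * (x - y) + d * d * z - u * t * t * q, ?_⟩
    rw [hP, hS, hz, hC, hNZ]
    ring
end

section
/- Let N = ∏_p p^{n_p} be a positive integer and τ ∈ SL₂(ℤ). Then there exist a subset S of the primes dividing N, a matrix W ∈ 𝒲(S), positive integers M₁ and M with M² | N, M₁ = gcd(M, N_S) and M₁² | N_S, and a rational number x, such that the matrix σ := W · τ · (1 x; 0 1) · diag(1/M₁, M₁/N_S) has integer entries with determinant 1 (i.e. σ ∈ SL₂(ℤ)) and the gcd of its lower-left entry with N equals N/M (i.e. C(σ) = N/M). -/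
open scoped MatrixGroups

private lemma prodPow_factorization (S : Finset ℕ) (hS : ∀ p ∈ S, Nat.Prime p)
    (f : ℕ → ℕ) (q : ℕ) :
    (∏ p ∈ S, p ^ f p).factorization q = if q ∈ S then f q else 0 := by
  classical
  revert hS
  induction S using Finset.induction_on with
  | empty => intro _; simp
  | @insert p S0 hp ih =>
    intro hS
    have hpp : Nat.Prime p := hS p (Finset.mem_insert_self p S0)
    have hS0 : ∀ r ∈ S0, Nat.Prime r := fun r hr => hS r (Finset.mem_insert_of_mem hr)
    have h1 : (∏ r ∈ S0, r ^ f r) ≠ 0 :=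
      Finset.prod_ne_zero_iff.mpr fun r hr => pow_ne_zero _ (hS0 r hr).pos.ne'
    rw [Finset.prod_insert hp,
      Nat.factorization_mul (pow_ne_zero _ hpp.pos.ne') h1,
      Finsupp.add_apply, hpp.factorization_pow, ih hS0, Finsupp.single_apply]
    by_cases hq : q = p
    · subst hq; simp [hp]
    · simp [Finset.mem_insert, hq, Ne.symm hq]

theorem stmt_4 (N : ℕ) (hN : 0 < N) (τ : SL(2, ℤ)) :
    ∃ S : Finset ℕ, S ⊆ N.primeFactors ∧
    ∃ NS : ℕ, NS = ∏ p ∈ S, p ^ N.factorization p ∧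
    ∃ (W : Matrix (Fin 2) (Fin 2) ℤ) (M₁ M : ℕ) (x : ℚ),
      -- W ∈ 𝒲(S):
      ((NS : ℤ) ∣ W 0 0 ∧ (NS : ℤ) ∣ W 1 0 ∧ (NS : ℤ) ∣ W 1 1) ∧
      (N : ℤ) ∣ W 1 0 ∧ W.det = (NS : ℤ) ∧
      0 < M₁ ∧ 0 < M ∧ M ^ 2 ∣ N ∧ M₁ = Nat.gcd M NS ∧ M₁ ^ 2 ∣ NS ∧
      ∃ σ : SL(2, ℤ),
        ((σ : Matrix (Fin 2) (Fin 2) ℤ).map ((↑) : ℤ → ℚ)) =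
          W.map ((↑) : ℤ → ℚ) * (τ : Matrix (Fin 2) (Fin 2) ℤ).map ((↑) : ℤ → ℚ) *
            !![1, x; 0, 1] * !![1 / (M₁ : ℚ), 0; 0, (M₁ : ℚ) / (NS : ℚ)] ∧
        Int.gcd ((σ : Matrix (Fin 2) (Fin 2) ℤ) 1 0) N = N / M := by
  classical
  have hN0 : N ≠ 0 := hN.ne'
  have hNZ : (N : ℤ) ≠ 0 := by exact_mod_cast hN0
  obtain ⟨a, b, c, d, hτ⟩ : ∃ a b c d : ℤ, (τ : Matrix (Fin 2) (Fin 2) ℤ) = !![a, b; c, d] :=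
    ⟨_, _, _, _, Matrix.eta_fin_two _⟩
  have hdet : a * d - b * c = 1 := by
    have h2 := τ.2
    rw [hτ, Matrix.det_fin_two_of] at h2
    exact h2
  set C : ℕ := Int.gcd c (N : ℤ) with hCdef
  have hC0 : C ≠ 0 := fun h => hNZ (by exact_mod_cast (Int.gcd_eq_zero_iff.mp h).2)
  have hCc : (C : ℤ) ∣ c := Int.gcd_dvd_left _ _
  have hCN : C ∣ N := by
    have h := Int.gcd_dvd_right (a := c) (b := (N : ℤ))
    exact_mod_cast h
  have hCeq : C = Nat.gcd c.natAbs N := by simp [hCdef, Int.gcd]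
  have hkn : ∀ p, C.factorization p ≤ N.factorization p :=
    fun p => Finsupp.le_def.mp ((Nat.factorization_le_iff_dvd hC0 hN0).mpr hCN) p
  set S : Finset ℕ :=
    N.primeFactors.filter (fun p => 2 * C.factorization p < N.factorization p) with hSdef
  have hSsub : S ⊆ N.primeFactors := Finset.filter_subset _ _
  have hNp : ∀ p ∈ N.primeFactors, Nat.Prime p := fun p hp => Nat.prime_of_mem_primeFactors hp
  have hSp : ∀ p ∈ S, Nat.Prime p := fun p hp => hNp p (hSsub hp)
  have hSlt : ∀ p ∈ S, 2 * C.factorization p < N.factorization p :=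
    fun p hp => (Finset.mem_filter.mp hp).2
  set Q : ℕ := ∏ p ∈ S, p ^ N.factorization p with hQdef
  set M₁ : ℕ := ∏ p ∈ S, p ^ C.factorization p with hM₁def
  set M : ℕ := ∏ p ∈ N.primeFactors,
      p ^ min (C.factorization p) (N.factorization p - C.factorization p) with hMdef
  set R : ℕ := ∏ p ∈ N.primeFactors \ S, p ^ N.factorization p with hRdef
  have prodpos : ∀ (T : Finset ℕ), (∀ p ∈ T, Nat.Prime p) → ∀ f : ℕ → ℕ,
      (0 : ℕ) < ∏ p ∈ T, p ^ f p :=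
    fun T hT f => Finset.prod_pos fun p hp => pow_pos (hT p hp).pos _
  have hQpos : 0 < Q := prodpos S hSp _
  have hM₁pos : 0 < M₁ := prodpos S hSp _
  have hMpos : 0 < M := prodpos _ hNp _
  have hRpos : 0 < R := prodpos _ (fun p hp => hNp p (Finset.mem_sdiff.mp hp).1) _
  have hQf : ∀ q, Q.factorization q = if q ∈ S then N.factorization q else 0 :=
    fun q => prodPow_factorization S hSp _ q
  have hM₁f : ∀ q, M₁.factorization q = if q ∈ S then C.factorization q else 0 :=
    fun q => prodPow_factorization S hSp _ q
  have hMf : ∀ q, M.factorization q = if q ∈ N.primeFactors then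
      min (C.factorization q) (N.factorization q - C.factorization q) else 0 :=
    fun q => prodPow_factorization _ hNp _ q
  have dvd_of_le : ∀ x y : ℕ, x ≠ 0 → y ≠ 0 →
      (∀ q, x.factorization q ≤ y.factorization q) → x ∣ y :=
    fun x y hx hy h => (Nat.factorization_le_iff_dvd hx hy).mp (Finsupp.le_def.mpr h)
  have hQN : Q ∣ N := by
    apply dvd_of_le _ _ hQpos.ne' hN0
    intro q
    rw [hQf q]
    split <;> simp
  have hQR : Q * R = N := by
    rw [hQdef, hRdef, ← Finset.prod_union Finset.disjoint_sdiff,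
      Finset.union_sdiff_of_subset hSsub, ← Nat.support_factorization]
    exact Nat.factorization_prod_pow_eq_self hN0
  have hQprime : ∀ p, Nat.Prime p → p ∣ Q → p ∈ S := by
    intro p hp hdvd
    have h1 : 0 < Q.factorization p := hp.factorization_pos_of_dvd hQpos.ne' hdvd
    rw [hQf p] at h1
    by_contra h
    simp [h] at h1
  have hRprime : ∀ p, Nat.Prime p → p ∣ R → p ∈ N.primeFactors \ S := by
    intro p hp hdvd
    have h1 : 0 < R.factorization p :=
      hp.factorization_pos_of_dvd hRpos.ne' hdvd
    rw [prodPow_factorization _ (fun r hr => hNp r (Finset.mem_sdiff.mp hr).1) _ p] at h1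
    by_contra h
    simp [h] at h1
  have hM₁prime : ∀ p, Nat.Prime p → p ∣ M₁ → p ∈ S := by
    intro p hp hdvd
    have h1 : 0 < M₁.factorization p := hp.factorization_pos_of_dvd hM₁pos.ne' hdvd
    rw [hM₁f p] at h1
    by_contra h
    simp [h] at h1
  have hQRcop : Nat.Coprime Q R := by
    have : Nat.gcd Q R = 1 := by
      by_contra hne
      obtain ⟨p, hp, hpd⟩ := Nat.exists_prime_and_dvd hne
      have h1 := hQprime p hp (hpd.trans (Nat.gcd_dvd_left _ _))
      have h2 := hRprime p hp (hpd.trans (Nat.gcd_dvd_right _ _))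
      exact (Finset.mem_sdiff.mp h2).2 h1
    exact this
  have hM2N : M ^ 2 ∣ N := by
    apply dvd_of_le _ _ (pow_ne_zero _ hMpos.ne') hN0
    intro q
    rw [Nat.factorization_pow, Finsupp.smul_apply, hMf q, smul_eq_mul]
    by_cases hq : q ∈ N.primeFactors
    · rw [if_pos hq]
      have h1 := hkn q
      have h2 := min_le_left (C.factorization q) (N.factorization q - C.factorization q)
      have h3 := min_le_right (C.factorization q) (N.factorization q - C.factorization q)
      omega
    · rw [if_neg hq]; simp
  have hM₁2Q : M₁ ^ 2 ∣ Q := by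
    apply dvd_of_le _ _ (pow_ne_zero _ hM₁pos.ne') hQpos.ne'
    intro q
    rw [Nat.factorization_pow, Finsupp.smul_apply, hM₁f q, hQf q, smul_eq_mul]
    by_cases hq : q ∈ S
    · rw [if_pos hq, if_pos hq]
      have := hSlt q hq
      omega
    · rw [if_neg hq, if_neg hq]
  have hM₁gcd : M₁ = Nat.gcd M Q := by
    have hg0 : Nat.gcd M Q ≠ 0 := Nat.gcd_ne_zero_left hMpos.ne'
    apply Nat.eq_of_factorization_eq hM₁pos.ne' hg0
    intro p
    rw [Nat.factorization_gcd hMpos.ne' hQpos.ne', Finsupp.inf_apply, hM₁f p, hMf p, hQf p]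
    by_cases hp : p ∈ S
    · rw [if_pos hp, if_pos (hSsub hp), if_pos hp]
      have h1 := hSlt p hp
      have h2 := hkn p
      rw [min_eq_left (by omega : C.factorization p ≤ N.factorization p - C.factorization p),
        min_eq_left h2]
    · rw [if_neg hp, if_neg hp]
      simp
  have hM₁C : M₁ ∣ C := by
    apply dvd_of_le _ _ hM₁pos.ne' hC0
    intro q
    rw [hM₁f q]
    split <;> simp
  have hM₁Q : M₁ ∣ Q := by
    apply dvd_of_le _ _ hM₁pos.ne' hQpos.ne'
    intro q
    rw [hM₁f q, hQf q]
    split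
    · exact hkn q
    · simp
  have hM₁c : (M₁ : ℤ) ∣ c := (Int.natCast_dvd_natCast.mpr hM₁C).trans hCc
  have hM₁Z : (M₁ : ℤ) ≠ 0 := by exact_mod_cast hM₁pos.ne'
  have hQZ0 : (Q : ℤ) ≠ 0 := by exact_mod_cast hQpos.ne'
  -- Bezout
  have hcopZ : IsCoprime (Q : ℤ) (R : ℤ) := by
    rw [Int.isCoprime_iff_gcd_eq_one]
    simpa [Int.gcd_natCast_natCast] using hQRcop
  obtain ⟨u, v, huv⟩ := hcopZ
  set A2 : ℤ := (Q : ℤ) * u * a + -v * c with hA2def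
  set B2 : ℤ := (Q : ℤ) * u * b + -v * d with hB2def
  set C2 : ℤ := (N : ℤ) * a + (Q : ℤ) * c with hC2def
  set D2 : ℤ := (N : ℤ) * b + (Q : ℤ) * d with hD2def
  have hNQR : (N : ℤ) = (Q : ℤ) * (R : ℤ) := by exact_mod_cast hQR.symm
  have hdetWt : A2 * D2 - B2 * C2 = (Q : ℤ) := by
    rw [hA2def, hB2def, hC2def, hD2def]
    linear_combination ((Q:ℤ)*(Q:ℤ)*u + v*(N:ℤ)) * hdet + (Q:ℤ) * huv + v * hNQR
  have hM₁A2 : (M₁ : ℤ) ∣ A2 :=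
    dvd_add (((Int.natCast_dvd_natCast.mpr hM₁Q).mul_right u).mul_right a) (hM₁c.mul_left (-v))
  have hM₁C2 : (M₁ : ℤ) ∣ C2 :=
    dvd_add ((Int.natCast_dvd_natCast.mpr (hM₁Q.trans hQN)).mul_right a) (hM₁c.mul_left (Q : ℤ))
  obtain ⟨e, he⟩ := hM₁A2
  obtain ⟨g, hg⟩ := hM₁C2
  obtain ⟨Q1, hQ1⟩ := hM₁Q
  have hQ1pos : Q1 ≠ 0 := fun h => hQpos.ne' (by rw [hQ1, h, mul_zero])
  have hQZQ1 : (Q : ℤ) = (M₁ : ℤ) * (Q1 : ℤ) := by exact_mod_cast hQ1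
  have hrel : e * D2 - B2 * g = (Q1 : ℤ) := by
    apply mul_left_cancel₀ hM₁Z
    have h := hdetWt
    rw [he, hg, hQZQ1] at h
    linear_combination h
  obtain ⟨c1, hc1⟩ := hM₁c
  have he' : e = (Q1 : ℤ) * u * a - v * c1 := by
    apply mul_left_cancel₀ hM₁Z
    have h := he.symm
    rw [hA2def, hc1, hQZQ1] at h
    linear_combination h
  have hSdvdQ : ∀ p ∈ S, p ∣ Q := by
    intro p hp
    have hnpos : N.factorization p ≠ 0 := by
      have := Finsupp.mem_support_iff.mp (by rw [Nat.support_factorization]; exact hSsub hp)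
      exact this
    exact (dvd_pow_self p hnpos).trans (Finset.dvd_prod_of_mem _ hp)
  have hcop : IsCoprime e g := by
    rw [Int.isCoprime_iff_gcd_eq_one]
    by_contra hne
    obtain ⟨p, hp, hpd⟩ := Nat.exists_prime_and_dvd hne
    have hpe : (p : ℤ) ∣ e := (Int.natCast_dvd_natCast.mpr hpd).trans (Int.gcd_dvd_left _ _)
    have hpg : (p : ℤ) ∣ g := (Int.natCast_dvd_natCast.mpr hpd).trans (Int.gcd_dvd_right _ _)
    have hpQ1Z : (p : ℤ) ∣ (Q1 : ℤ) := hrel ▸ dvd_sub (hpe.mul_right D2) (hpg.mul_left B2)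
    have hpQ1 : p ∣ Q1 := by exact_mod_cast hpQ1Z
    have hpS : p ∈ S := hQprime p hp (hpQ1.trans ⟨M₁, by rw [hQ1, mul_comm]⟩)
    have hpvc1 : (p : ℤ) ∣ v * c1 := by
      have h2 : v * c1 = (Q1 : ℤ) * u * a - e := by linear_combination he'
      rw [h2]
      exact dvd_sub ((hpQ1Z.mul_right u).mul_right a) hpe
    rcases (Nat.prime_iff_prime_int.mp hp).dvd_mul.mp hpvc1 with hv | hc1d
    · have hpQ : (p : ℤ) ∣ (Q : ℤ) := Int.natCast_dvd_natCast.mpr (hSdvdQ p hpS)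
      have h1 : (p : ℤ) ∣ 1 := huv ▸ dvd_add (hpQ.mul_left u) (hv.mul_right (R : ℤ))
      have h2 : p ∣ 1 := by exact_mod_cast h1
      exact hp.one_lt.ne' (Nat.dvd_one.mp h2)
    · have hpkM₁ : (p : ℤ) ^ C.factorization p ∣ (M₁ : ℤ) := by
        exact_mod_cast Int.natCast_dvd_natCast.mpr
          (Finset.dvd_prod_of_mem (fun r => r ^ C.factorization r) hpS)
      have h3 : (p : ℤ) ^ (C.factorization p + 1) ∣ c := by
        rw [hc1, pow_succ]
        exact mul_dvd_mul hpkM₁ hc1d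
      have h4 : p ^ (C.factorization p + 1) ∣ C := by
        conv_rhs => rw [hCeq]
        refine Nat.dvd_gcd ?_ ?_
        · have := Int.natAbs_dvd_natAbs.mpr h3
          simpa [Int.natAbs_pow] using this
        · have hle : C.factorization p + 1 ≤ N.factorization p := by
            have := hSlt p hpS
            omega
          exact (pow_dvd_pow p hle).trans (Nat.ordProj_dvd N p)
      have h5 := (hp.pow_dvd_iff_le_factorization hC0).mp h4
      omega
  obtain ⟨f0, h0, hfh⟩ := hcop
  have hσdet : Matrix.det !![e, -h0; g, f0] = 1 := by
    rw [Matrix.det_fin_two_of]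
    linear_combination hfh
  have hcons : A2 * (f0 * (Q1 : ℤ) - D2) = C2 * (-h0 * (Q1 : ℤ) - B2) := by
    linear_combination (f0 * (Q1:ℤ)) * he - (-h0 * (Q1:ℤ)) * hg + ((M₁:ℤ) * (Q1:ℤ)) * hfh
      - hdetWt - hQZQ1
  have hQ1Z : (Q1 : ℚ) ≠ 0 := by exact_mod_cast hQ1pos
  have hM₁Q0 : (M₁ : ℚ) ≠ 0 := by exact_mod_cast hM₁pos.ne'
  have hQQ0 : (Q : ℚ) ≠ 0 := by exact_mod_cast hQpos.ne'
  have hconsQ : (A2 : ℚ) * (f0 * (Q1 : ℚ) - D2) = (C2 : ℚ) * (-h0 * (Q1 : ℚ) - B2) := by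
    exact_mod_cast hcons
  have hkey : ∃ x : ℚ, (A2 : ℚ) * x + B2 = -h0 * (Q1 : ℚ) ∧
      (C2 : ℚ) * x + D2 = f0 * (Q1 : ℚ) := by
    by_cases hA2z : (A2 : ℚ) = 0
    · have hC2z : (C2 : ℚ) ≠ 0 := by
        intro h0'
        have hA2z' : A2 = 0 := by exact_mod_cast hA2z
        have hC2z' : C2 = 0 := by exact_mod_cast h0'
        rw [hA2z', hC2z'] at hdetWt
        simp at hdetWt
        exact hQZ0 hdetWt.symm
      refine ⟨((f0 : ℚ) * (Q1 : ℚ) - D2) / C2, ?_, ?_⟩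
      · have hB2 : -h0 * (Q1 : ℚ) - B2 = 0 := by
          rcases mul_eq_zero.mp (by rw [← hconsQ, hA2z, zero_mul] : (C2:ℚ) * (-h0 * (Q1:ℚ) - B2) = 0) with h | h
          · exact absurd h hC2z
          · exact h
        rw [hA2z]
        linarith [hB2]
      · field_simp
        ring
    · refine ⟨((-h0 : ℚ) * (Q1 : ℚ) - B2) / A2, ?_, ?_⟩
      · field_simp
        ring
      · field_simp
        linear_combination - hconsQ
  obtain ⟨x, hx1, hx2⟩ := hkey
  have heX : (Q : ℤ) * u * a + -v * c = (M₁ : ℤ) * e := by rw [← hA2def]; exact he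
  have hgX : (N : ℤ) * a + (Q : ℤ) * c = (M₁ : ℤ) * g := by rw [← hC2def]; exact hg
  have heQ : (Q : ℚ) * (u : ℚ) * (a : ℚ) + -(v : ℚ) * (c : ℚ) = (M₁ : ℚ) * (e : ℚ) := by
    exact_mod_cast heX
  have hgQ : (N : ℚ) * (a : ℚ) + (Q : ℚ) * (c : ℚ) = (M₁ : ℚ) * (g : ℚ) := by
    exact_mod_cast hgX
  have hx1Q : ((Q : ℚ) * u * a + -(v:ℚ) * c) * x + ((Q : ℚ) * u * b + -(v:ℚ) * d)
      = -(h0:ℚ) * (Q1 : ℚ) := by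
    rw [hA2def, hB2def] at hx1
    push_cast at hx1
    convert hx1 using 2 <;> push_cast <;> ring
  have hx2Q : ((N : ℚ) * a + (Q : ℚ) * c) * x + ((N : ℚ) * b + (Q : ℚ) * d)
      = (f0:ℚ) * (Q1 : ℚ) := by
    rw [hC2def, hD2def] at hx2
    push_cast at hx2
    convert hx2 using 2 <;> push_cast <;> ring
  have hQQ1Q : (Q : ℚ) = (M₁ : ℚ) * (Q1 : ℚ) := by exact_mod_cast hQ1
  set Wm : Matrix (Fin 2) (Fin 2) ℤ := !![(Q : ℤ) * u, -v; (N : ℤ), (Q : ℤ)] with hWdef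
  have hmat : (!![e, -h0; g, f0]).map ((↑) : ℤ → ℚ) =
      Wm.map ((↑) : ℤ → ℚ) * (τ : Matrix (Fin 2) (Fin 2) ℤ).map ((↑) : ℤ → ℚ) *
        !![1, x; 0, 1] * !![1 / (M₁ : ℚ), 0; 0, (M₁ : ℚ) / (Q : ℚ)] := by
    rw [hτ, hWdef]
    ext i j
    fin_cases i <;> fin_cases j
    · simp [Matrix.mul_apply, Fin.sum_univ_succ]
      field_simp
      linear_combination -heQ
    · simp [Matrix.mul_apply, Fin.sum_univ_succ]
      field_simp
      linear_combination -(M₁:ℚ) * hx1Q - (h0:ℚ) * hQQ1Q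
    · simp [Matrix.mul_apply, Fin.sum_univ_succ]
      field_simp
      linear_combination -hgQ
    · simp [Matrix.mul_apply, Fin.sum_univ_succ]
      field_simp
      linear_combination -(M₁:ℚ) * hx2Q + (f0:ℚ) * hQQ1Q
  have hgcd : Int.gcd g (N : ℤ) = N / M := by
    have hMdvdN : M ∣ N := (dvd_pow_self M two_ne_zero).trans hM2N
    have hpowNdvd : ∀ p : ℕ, (p : ℤ) ^ N.factorization p ∣ (N : ℤ) := fun p => by
      have := Int.natCast_dvd_natCast.mpr (Nat.ordProj_dvd N p)
      push_cast at this; exact this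
    have hpowQdvd : ∀ p ∈ S, (p : ℤ) ^ N.factorization p ∣ (Q : ℤ) := fun p hp => by
      have := Int.natCast_dvd_natCast.mpr
        (Finset.dvd_prod_of_mem (fun r => r ^ N.factorization r) hp : p ^ N.factorization p ∣ Q)
      exact_mod_cast this
    have hCof : ∀ p, Nat.Prime p → ∀ j, j ≤ N.factorization p → (p : ℤ) ^ j ∣ c →
        j ≤ C.factorization p := by
      intro p hp j hj hdvd
      have h1 : p ^ j ∣ c.natAbs := by
        simpa [Int.natAbs_pow] using Int.natAbs_dvd_natAbs.mpr hdvd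
      have h2 : p ^ j ∣ N := (pow_dvd_pow p hj).trans (Nat.ordProj_dvd N p)
      have h3 : p ^ j ∣ C := hCeq ▸ Nat.dvd_gcd h1 h2
      exact (hp.pow_dvd_iff_le_factorization hC0).mp h3
    have hcof : ∀ p j : ℕ, p ^ j ∣ C → (p : ℤ) ^ j ∣ c := by
      intro p j hdvd
      have := (Int.natCast_dvd_natCast.mpr hdvd).trans hCc
      push_cast at this; exact this
    have hpa : ∀ p : ℕ, Nat.Prime p → (p : ℤ) ∣ c → ¬(p : ℤ) ∣ a := by
      intro p hp hpc hpa
      have h1 : (p : ℤ) ∣ 1 := hdet ▸ dvd_sub (hpa.mul_right d) (hpc.mul_left b)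
      have h2 : p ∣ 1 := by exact_mod_cast h1
      exact hp.one_lt.ne' (Nat.dvd_one.mp h2)
    have hNaN : ∀ p : ℕ, Nat.Prime p → (p : ℤ) ∣ c →
        ¬(p : ℤ) ^ (N.factorization p + 1) ∣ (N : ℤ) * a := by
      intro p hp hpc hdvd
      have hco : IsCoprime ((p : ℤ) ^ (N.factorization p + 1)) a :=
        IsCoprime.pow_left
          (((Nat.prime_iff_prime_int.mp hp).coprime_iff_not_dvd).mpr (hpa p hp hpc))
      have h1 : (p : ℤ) ^ (N.factorization p + 1) ∣ (N : ℤ) := hco.dvd_of_dvd_mul_right hdvd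
      have h2 : p ^ (N.factorization p + 1) ∣ N := by
        have := Int.natAbs_dvd_natAbs.mpr h1
        simpa [Int.natAbs_pow] using this
      have := (hp.pow_dvd_iff_le_factorization hN0).mp h2
      omega
    by_cases hg0 : g = 0
    · have hC2zero : (N : ℤ) * a = -((Q : ℤ) * c) := by
        have h := hg
        rw [hC2def, hg0, mul_zero] at h
        linarith [h]
      have hM1 : M = 1 := by
        by_contra hne
        obtain ⟨p, hp, hpd⟩ := Nat.exists_prime_and_dvd hne
        have h1 : 0 < M.factorization p := hp.factorization_pos_of_dvd hMpos.ne' hpd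
        rw [hMf p] at h1
        by_cases hq : p ∈ N.primeFactors
        case neg => simp [hq] at h1
        rw [if_pos hq] at h1
        obtain ⟨hk1, hk2⟩ := lt_min_iff.mp h1
        have hpC : p ∣ C := Nat.dvd_of_factorization_pos (by omega)
        have hpc : (p : ℤ) ∣ c := by
          have := hcof p 1 (by simpa using hpC)
          simpa using this
        by_cases hqS : p ∈ S
        · have h3 : (p : ℤ) ^ (N.factorization p + 1) ∣ (Q : ℤ) * c := by
            rw [pow_succ]
            exact mul_dvd_mul (hpowQdvd p hqS) hpc
          have h4 : (p : ℤ) ^ (N.factorization p + 1) ∣ (N : ℤ) * a := by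
            rw [hC2zero]
            exact dvd_neg.mpr h3
          exact hNaN p hp hpc h4
        · have hkle := hkn p
          have hkn1 : C.factorization p + 1 ≤ N.factorization p := by omega
          have h6 : (p : ℤ) ^ (C.factorization p + 1) ∣ (N : ℤ) * a :=
            dvd_mul_of_dvd_left ((pow_dvd_pow _ hkn1).trans (hpowNdvd p)) a
          have h5 : (p : ℤ) ^ (C.factorization p + 1) ∣ (Q : ℤ) * c := by
            rw [hC2zero] at h6
            exact dvd_neg.mp h6
          have hndQ : ¬(p : ℤ) ∣ (Q : ℤ) := fun hdq =>
            hqS (hQprime p hp (by exact_mod_cast hdq))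
          have hco : IsCoprime ((p : ℤ) ^ (C.factorization p + 1)) (Q : ℤ) :=
            IsCoprime.pow_left
              (((Nat.prime_iff_prime_int.mp hp).coprime_iff_not_dvd).mpr hndQ)
          have h7 : (p : ℤ) ^ (C.factorization p + 1) ∣ c := hco.dvd_of_dvd_mul_left h5
          have := hCof p hp _ hkn1 h7
          omega
      rw [hg0, hM1]
      simp
    · have hgabs : g.natAbs ≠ 0 := Int.natAbs_ne_zero.mpr hg0
      have hC2abs : M₁ * g.natAbs = C2.natAbs := by
        rw [hg, Int.natAbs_mul]
        simp
      have hInt : Int.gcd g (N : ℤ) = Nat.gcd g.natAbs N := by simp [Int.gcd]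
      rw [hInt]
      have hNM0 : N / M ≠ 0 := (Nat.div_pos (Nat.le_of_dvd hN hMdvdN) hMpos).ne'
      have hgcd0 : Nat.gcd g.natAbs N ≠ 0 := fun hh => hN0 (Nat.eq_zero_of_gcd_eq_zero_right hh)
      apply Nat.eq_of_factorization_eq hgcd0 hNM0
      intro p
      by_cases hq : p ∈ N.primeFactors
      case neg =>
        have hnp0 : N.factorization p = 0 := by
          rw [← Nat.support_factorization] at hq
          exact Finsupp.notMem_support_iff.mp hq
        have h1 := (Finsupp.le_def.mp ((Nat.factorization_le_iff_dvd hgcd0 hN0).mpr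
          (Nat.gcd_dvd_right _ _))) p
        have h2 := (Finsupp.le_def.mp ((Nat.factorization_le_iff_dvd hNM0 hN0).mpr
          (Nat.div_dvd_of_dvd hMdvdN))) p
        omega
      case pos =>
      have hp := hNp p hq
      rw [Nat.factorization_gcd hgabs hN0, Finsupp.inf_apply, Nat.factorization_div hMdvdN,
        Finsupp.tsub_apply, hMf p, if_pos hq]
      have hvM₁ : p ∉ S → M₁.factorization p = 0 := fun hS' => by rw [hM₁f p, if_neg hS']
      have hC2ne : C2.natAbs ≠ 0 := by
        rw [← hC2abs]
        exact mul_ne_zero hM₁pos.ne' hgabs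
      have hvC2 : C2.natAbs.factorization p
          = M₁.factorization p + g.natAbs.factorization p := by
        rw [← hC2abs, Nat.factorization_mul hM₁pos.ne' hgabs, Finsupp.add_apply]
      have hC2dvd : ∀ j : ℕ, ((p : ℤ) ^ j ∣ C2 ↔ j ≤ C2.natAbs.factorization p) := by
        intro j
        rw [← hp.pow_dvd_iff_le_factorization hC2ne]
        constructor
        · intro hh
          simpa [Int.natAbs_pow] using Int.natAbs_dvd_natAbs.mpr hh
        · intro hh
          have h9 := Int.natCast_dvd_natCast.mpr hh
          push_cast at h9
          exact (dvd_abs _ _).mp h9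
      by_cases hqS : p ∈ S
      · have hlt := hSlt p hqS
        have hminS : min (C.factorization p) (N.factorization p - C.factorization p)
            = C.factorization p := min_eq_left (by omega)
        rw [hminS]
        have hdN : (p : ℤ) ^ N.factorization p ∣ C2 := by
          rw [hC2def]
          exact dvd_add (dvd_mul_of_dvd_left (hpowNdvd p) a)
            (dvd_mul_of_dvd_left (hpowQdvd p hqS) c)
        have hlow : N.factorization p ≤ C2.natAbs.factorization p := (hC2dvd _).mp hdN
        rw [hvC2, hM₁f p, if_pos hqS] at hlow
        by_cases hk0 : C.factorization p = 0
        · rw [hk0]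
          simp only [Nat.sub_zero]
          exact min_eq_right (by omega)
        · have hpC : p ∣ C := Nat.dvd_of_factorization_pos hk0
          have hpc : (p : ℤ) ∣ c := by
            have := hcof p 1 (by simpa using hpC)
            simpa using this
          have hupper : ¬(p : ℤ) ^ (N.factorization p + 1) ∣ C2 := by
            intro hh
            have h3 : (p : ℤ) ^ (N.factorization p + 1) ∣ (Q : ℤ) * c := by
              rw [pow_succ]
              exact mul_dvd_mul (hpowQdvd p hqS) hpc
            have h4 : (p : ℤ) ^ (N.factorization p + 1) ∣ (N : ℤ) * a := by
              have hs : (N : ℤ) * a = C2 - (Q : ℤ) * c := by rw [hC2def]; ring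
              rw [hs]
              exact dvd_sub hh h3
            exact hNaN p hp hpc h4
          have hup : C2.natAbs.factorization p ≤ N.factorization p := by
            by_contra hcon
            exact hupper ((hC2dvd _).mpr (by omega))
          rw [hvC2, hM₁f p, if_pos hqS] at hup
          have hv : g.natAbs.factorization p = N.factorization p - C.factorization p := by omega
          rw [hv]
          exact min_eq_left (Nat.sub_le _ _)
      · have h2k : ¬2 * C.factorization p < N.factorization p := fun hh =>
          hqS (Finset.mem_filter.mpr ⟨hq, hh⟩)
        have hkle := hkn p
        have hminS : min (C.factorization p) (N.factorization p - C.factorization p)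
            = N.factorization p - C.factorization p := min_eq_right (by omega)
        rw [hminS]
        have htar : N.factorization p - (N.factorization p - C.factorization p)
            = C.factorization p := by omega
        rw [htar]
        have hpkc : (p : ℤ) ^ C.factorization p ∣ c := hcof p _ (Nat.ordProj_dvd C p)
        have hdK : (p : ℤ) ^ C.factorization p ∣ C2 := by
          rw [hC2def]
          exact dvd_add (dvd_mul_of_dvd_left ((pow_dvd_pow _ hkle).trans (hpowNdvd p)) a)
            (hpkc.mul_left _)
        have hlow : C.factorization p ≤ C2.natAbs.factorization p := (hC2dvd _).mp hdK
        rw [hvC2, hvM₁ hqS, zero_add] at hlow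
        by_cases hkeqn : C.factorization p = N.factorization p
        · rw [hkeqn]
          exact min_eq_right (by omega)
        · have hklt : C.factorization p + 1 ≤ N.factorization p := by omega
          have hupper : ¬(p : ℤ) ^ (C.factorization p + 1) ∣ C2 := by
            intro hh
            have h6 : (p : ℤ) ^ (C.factorization p + 1) ∣ (N : ℤ) * a :=
              dvd_mul_of_dvd_left ((pow_dvd_pow _ hklt).trans (hpowNdvd p)) a
            have h5 : (p : ℤ) ^ (C.factorization p + 1) ∣ (Q : ℤ) * c := by
              have hs : (Q : ℤ) * c = C2 - (N : ℤ) * a := by rw [hC2def]; ring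
              rw [hs]
              exact dvd_sub hh h6
            have hndQ : ¬(p : ℤ) ∣ (Q : ℤ) := fun hdq =>
              hqS (hQprime p hp (by exact_mod_cast hdq))
            have hco : IsCoprime ((p : ℤ) ^ (C.factorization p + 1)) (Q : ℤ) :=
              IsCoprime.pow_left
                (((Nat.prime_iff_prime_int.mp hp).coprime_iff_not_dvd).mpr hndQ)
            have h7 : (p : ℤ) ^ (C.factorization p + 1) ∣ c := hco.dvd_of_dvd_mul_left h5
            have := hCof p hp _ hklt h7
            omega
          have hup : C2.natAbs.factorization p ≤ C.factorization p := by
            by_contra hcon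
            exact hupper ((hC2dvd _).mpr (by omega))
          rw [hvC2, hvM₁ hqS, zero_add] at hup
          have hv : g.natAbs.factorization p = C.factorization p := le_antisymm hup hlow
          rw [hv]
          exact min_eq_left (by omega)
  refine ⟨S, hSsub, Q, hQdef, Wm, M₁, M, x, ⟨⟨u, by simp [hWdef]⟩, ?_, ⟨1, by simp [hWdef]⟩⟩,
    ?_, ?_, hM₁pos, hMpos, hM2N, hM₁gcd, hM₁2Q, ⟨!![e, -h0; g, f0], hσdet⟩, ?_, ?_⟩
  · simp [hWdef]
    exact Int.natCast_dvd_natCast.mpr hQN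
  · simp [hWdef]
  · rw [hWdef, Matrix.det_fin_two_of]
    linear_combination (Q : ℤ) * huv + v * hNQR
  · exact hmat
  · exact hgcd
end

section
/- Let z₀ be a point of the upper half-plane ℍ with Im(z₀) ≥ √3/2. Then for every real number x and every γ ∈ SL₂(ℤ), one has Im(z₀) ≥ (3/4) · Im(γ·(z₀ + x)), where γ acts on ℍ by fractional linear transformations. -/
open scoped MatrixGroups UpperHalfPlane

theorem stmt_5 (z₀ : UpperHalfPlane) (h : Real.sqrt 3 / 2 ≤ z₀.im)
    (x : ℝ) (γ : SL(2, ℤ)) (w : ℍ) (hw : (w : ℂ) = (z₀ : ℂ) + (x : ℂ)) :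
    (3 / 4 : ℝ) * (γ • w).im ≤ z₀.im := by
  have hwim : w.im = z₀.im := by
    rw [← UpperHalfPlane.coe_im, hw, Complex.add_im, Complex.ofReal_im,
      UpperHalfPlane.coe_im, add_zero]
  have him : (0:ℝ) < z₀.im := z₀.im_pos
  have hsq : (3/4 : ℝ) ≤ z₀.im ^ 2 := by
    have h3 : (0:ℝ) ≤ Real.sqrt 3 / 2 := by positivity
    have := mul_le_mul h h h3 him.le
    have h3' : Real.sqrt 3 * Real.sqrt 3 = 3 :=
      Real.mul_self_sqrt (by norm_num)
    nlinarith
  rw [ModularGroup.im_smul_eq_div_normSq, hwim]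
  set n : ℝ := Complex.normSq (UpperHalfPlane.denom γ w) with hn
  have hnpos : 0 < n := UpperHalfPlane.normSq_denom_pos _ w.im_ne_zero
  have hnval : n = (((γ 1 0 : ℤ):ℝ) * w.re + ((γ 1 1 : ℤ):ℝ))^2
      + (((γ 1 0 : ℤ):ℝ) * w.im)^2 := by
    rw [hn, ModularGroup.denom_apply, Complex.normSq_apply]
    simp [UpperHalfPlane.coe_re, UpperHalfPlane.coe_im]
    ring
  rcases eq_or_ne (γ 1 0) 0 with hc | hc
  · have hd : γ 1 1 = 1 ∨ γ 1 1 = -1 := by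
      have hdet := γ.2
      rw [Matrix.det_fin_two] at hdet
      have : γ 0 0 * γ 1 1 = 1 := by rw [hc] at hdet; linarith
      rcases Int.eq_one_or_neg_one_of_mul_eq_one' this with ⟨_, h2⟩ | ⟨_, h2⟩
      · exact Or.inl h2
      · exact Or.inr h2
    have hn1 : n = 1 := by
      rw [hnval, hc]
      rcases hd with h1 | h1 <;> rw [h1] <;> norm_num
    rw [hn1]
    nlinarith
  · have hc1 : (1:ℝ) ≤ ((γ 1 0 : ℤ) : ℝ)^2 := by
      have : (1:ℤ) ≤ (γ 1 0)^2 := by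
        rcases lt_or_gt_of_ne hc with h' | h' <;> nlinarith
      exact_mod_cast this
    have hle : (z₀.im)^2 ≤ n := by
      rw [hnval, ← hwim]
      nlinarith [sq_nonneg (((γ 1 0 : ℤ):ℝ) * w.re + ((γ 1 1 : ℤ):ℝ)), sq_nonneg w.im,
        w.im_pos]
    have h34 : (3/4:ℝ) ≤ n := by linarith
    calc (3/4:ℝ) * (z₀.im / n) ≤ (3/4:ℝ) * (z₀.im / (3/4)) := by
          gcongr
      _ = z₀.im := by ring
end

section
/- Let N = N₂N₀² be a positive integer with N₂ squarefree, let M be a positive integer dividing N₀, let c be an integer and let t be a positive integer such that N divides c²·t. Let t₀ be the largest divisor of t that is coprime to N. Then t² · M⁴ · gcd(c, N/M²)² · N₀² ≥ t₀² · M² · N². -/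
theorem stmt_16 (N N₂ N₀ M : ℕ) (hN : N = N₂ * N₀ ^ 2) (hN₂ : Squarefree N₂)
    (hM : 0 < M) (hMN₀ : M ∣ N₀) (c : ℤ) (t : ℕ) (ht : 0 < t)
    (hdvd : (N : ℤ) ∣ c ^ 2 * t)
    (t₀ : ℕ) (ht₀dvd : t₀ ∣ t) (ht₀cop : Nat.Coprime t₀ N)
    (ht₀max : ∀ d : ℕ, d ∣ t → Nat.Coprime d N → d ≤ t₀) :
    t₀ ^ 2 * M ^ 2 * N ^ 2 ≤
      t ^ 2 * M ^ 4 * Int.gcd c ((N / M ^ 2 : ℕ) : ℤ) ^ 2 * N₀ ^ 2 := by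
  rcases Nat.eq_zero_or_pos N₀ with h0 | hN₀pos
  · subst h0
    simp [hN]
  have hN₂ne : N₂ ≠ 0 := hN₂.ne_zero
  have hNpos : 0 < N := by
    rw [hN]; positivity
  have hM2N : M ^ 2 ∣ N := by
    rw [hN]
    exact Dvd.dvd.mul_left (pow_dvd_pow_of_dvd hMN₀ 2) N₂
  have hMNcancel : M ^ 2 * (N / M ^ 2) = N := Nat.mul_div_cancel' hM2N
  have hdivpos : 0 < N / M ^ 2 := Nat.div_pos (Nat.le_of_dvd hNpos hM2N) (by positivity)
  have ht₀pos : 0 < t₀ := Nat.pos_of_dvd_of_pos ht₀dvd ht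
  rcases eq_or_ne c 0 with rfl | hc
  · -- c = 0 : gcd = N / M², and M²·(N/M²) = N
    have hgcd : Int.gcd 0 ((N / M ^ 2 : ℕ) : ℤ) = N / M ^ 2 := by
      rw [Int.gcd_zero_left, Int.natAbs_natCast]
    rw [hgcd]
    have h1 : t₀ ≤ t := Nat.le_of_dvd ht ht₀dvd
    have h2 : M ≤ N₀ := Nat.le_of_dvd hN₀pos hMN₀
    have : t ^ 2 * M ^ 4 * (N / M ^ 2) ^ 2 * N₀ ^ 2 = t ^ 2 * (M ^ 2 * (N / M ^ 2)) ^ 2 * N₀ ^ 2 := by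
      ring
    rw [this, hMNcancel]
    have h3 := Nat.mul_le_mul (Nat.mul_le_mul h1 h2) (Nat.mul_le_mul h1 h2)
    nlinarith [h3, sq_nonneg N]
  · set C := c.natAbs with hCdef
    have hCpos : 0 < C := Int.natAbs_pos.mpr hc
    have hNdvdnat : N ∣ C ^ 2 * t := by
      have := Int.natAbs_dvd_natAbs.mpr hdvd
      simpa [Int.natAbs_mul, Int.natAbs_pow] using this
    set g := Nat.gcd C (N / M ^ 2) with hgdef
    have hgcoe : Int.gcd c ((N / M ^ 2 : ℕ) : ℤ) = g := by
      simp only [Int.gcd, Int.natAbs_natCast]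
      rfl
    have hgpos : 0 < g := Nat.gcd_pos_of_pos_left _ hCpos
    -- key divisibility
    have key : t₀ * (N₂ * N₀) ∣ t * (M * g) := by
      rw [← Nat.factorization_le_iff_dvd (by positivity) (by positivity)]
      rw [Finsupp.le_def]
      intro p
      by_cases hp : p.Prime
      · have ht₀t : t₀.factorization p ≤ t.factorization p :=
          (Nat.factorization_le_iff_dvd ht₀pos.ne' ht.ne').mpr ht₀dvd p
        have ha1 : N₂.factorization p ≤ 1 := hN₂.natFactorization_le_one p
        have hmb : M.factorization p ≤ N₀.factorization p :=
          (Nat.factorization_le_iff_dvd hM.ne' hN₀pos.ne').mpr hMN₀ p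
        have hvN : N.factorization p = N₂.factorization p + 2 * N₀.factorization p := by
          rw [hN, Nat.factorization_mul hN₂ne (by positivity), Nat.factorization_pow]
          simp [mul_comm]
        have hNt : N.factorization p ≤ 2 * C.factorization p + t.factorization p := by
          have := (Nat.factorization_le_iff_dvd hNpos.ne' (by positivity)).mpr hNdvdnat p
          rwa [Nat.factorization_mul (by positivity) ht.ne', Nat.factorization_pow,
            Finsupp.add_apply, Finsupp.smul_apply, smul_eq_mul] at this
        have hgfact : g.factorization p =
            min (C.factorization p) (N.factorization p - 2 * M.factorization p) := by
          rw [hgdef, Nat.factorization_gcd hCpos.ne' hdivpos.ne',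
            Nat.factorization_div hM2N]
          simp [Nat.factorization_pow, mul_comm]
        have hLHS : (t₀ * (N₂ * N₀)).factorization p =
            t₀.factorization p + (N₂.factorization p + N₀.factorization p) := by
          rw [Nat.factorization_mul ht₀pos.ne' (by positivity),
            Nat.factorization_mul hN₂ne hN₀pos.ne']
          simp
        have hRHS : (t * (M * g)).factorization p =
            t.factorization p + (M.factorization p + g.factorization p) := by
          rw [Nat.factorization_mul ht.ne' (by positivity),
            Nat.factorization_mul hM.ne' hgpos.ne']
          simp
        rw [hLHS, hRHS, hgfact]
        by_cases hpN : p ∣ N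
        · have ht₀0 : t₀.factorization p = 0 := by
            apply Nat.factorization_eq_zero_of_not_dvd
            intro hpt₀
            have : p ∣ Nat.gcd t₀ N := Nat.dvd_gcd hpt₀ hpN
            rw [ht₀cop] at this
            exact hp.ne_one (Nat.dvd_one.mp this)
          omega
        · have hN0 : N.factorization p = 0 := Nat.factorization_eq_zero_of_not_dvd hpN
          omega
      · simp [Nat.factorization_eq_zero_of_not_prime _ hp]
    have hle : t₀ * (N₂ * N₀) ≤ t * (M * g) := Nat.le_of_dvd (by positivity) key
    rw [hgcoe, hN]
    nlinarith [Nat.mul_le_mul hle hle, sq_nonneg (M * N₀)]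
end
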